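/- arXiv:2002.09759 — 2 statements merged into one kernel-verified Lean document; each statement's English description precedes it below -/
import Mathlib

section
/- Let I, J, K, R, L be positive integers, λ > 0, η ≠ 0, and let Y : {1,…,I}×{1,…,J}×{1,…,K} → ℝ be a third-order tensor. Let A ∈ ℝ^{I×RL} and B ∈ ℝ^{J×RL} have columns a_{rl} and b_{rl} indexed by (r,l) ∈ {1,…,R}×{1,…,L}, and let c^k_1,…,c^k_R ∈ ℝ^K. Define: the matrix N ∈ ℝ^{(IJ)×K} with rows indexed by pairs (i,j) and entries N((i,j),k) = Y(i,j,k); the matrix S ∈ ℝ^{(IJ)×R} with entries S((i,j),r) = Σ_{l=1}^{L} A(i,(r,l))·B(j,(r,l)); for each r, S_r = Σ_{l=1}^{L} √(‖a_{rl}‖₂² + ‖b_{rl}‖₂² + η²); and the R×R diagonal matrix D₁ with D₁(r,r) = (S_r² + ‖c^k_r‖₂² + η²)^{−1/2}. Then the function C ↦ (1/2)‖N − S Cᵀ‖_F² + (λ/2) Σ_{r=1}^{R} (S_r² + ‖c_r‖₂² + η²) / √(S_r² + ‖c^k_r‖₂² + η²), where c_r denotes the r-th column of C ∈ ℝ^{K×R},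 has the unique global minimizer C* = Nᵀ S (SᵀS + λD₁)⁻¹. -/
/-- The closed-form C-update of BTD-HIRLS,
`C* = Nᵀ S (SᵀS + λD₁)⁻¹`, is the unique global minimizer of the corresponding
reweighted least squares subproblem. -/
theorem stmt_5 (I J K R L : ℕ)
    (hI : 0 < I) (hJ : 0 < J) (hK : 0 < K) (hR : 0 < R) (hL : 0 < L)
    (lam : ℝ) (hlam : 0 < lam) (η : ℝ) (hη : η ≠ 0)
    (Y : Fin I → Fin J → Fin K → ℝ)
    (A : Matrix (Fin I) (Fin R × Fin L) ℝ)
    (B : Matrix (Fin J) (Fin R × Fin L) ℝ)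
    (ck : Fin R → Fin K → ℝ)
    (N : Matrix (Fin I × Fin J) (Fin K) ℝ)
    (hN : ∀ i j k, N (i, j) k = Y i j k)
    (S : Matrix (Fin I × Fin J) (Fin R) ℝ)
    (hS : ∀ i j r, S (i, j) r = ∑ l, A i (r, l) * B j (r, l))
    (Ssum : Fin R → ℝ)
    (hSsum : ∀ r, Ssum r =
      ∑ l, Real.sqrt ((∑ i, A i (r, l) ^ 2) + (∑ j, B j (r, l) ^ 2) + η ^ 2))
    (D1 : Matrix (Fin R) (Fin R) ℝ)
    (hD1 : D1 = Matrix.diagonal fun r =>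
      (Real.sqrt (Ssum r ^ 2 + (∑ k, ck r k ^ 2) + η ^ 2))⁻¹)
    (g : Matrix (Fin K) (Fin R) ℝ → ℝ)
    (hg : ∀ C, g C = (1 / 2) * (∑ p, ∑ k, (N p k - (S * C.transpose) p k) ^ 2)
      + (lam / 2) * ∑ r, (Ssum r ^ 2 + (∑ k, C k r ^ 2) + η ^ 2) /
          Real.sqrt (Ssum r ^ 2 + (∑ k, ck r k ^ 2) + η ^ 2))
    (Cstar : Matrix (Fin K) (Fin R) ℝ)
    (hCstar : Cstar = N.transpose * S * (S.transpose * S + lam • D1)⁻¹) :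
    ∀ C, g Cstar ≤ g C ∧ (g Cstar = g C ↔ C = Cstar) := by
  -- the weights
  set w : Fin R → ℝ := fun r => (Real.sqrt (Ssum r ^ 2 + (∑ k, ck r k ^ 2) + η ^ 2))⁻¹
    with hwdef
  have hargpos : ∀ r, 0 < Ssum r ^ 2 + (∑ k, ck r k ^ 2) + η ^ 2 := by
    intro r
    have h2 : 0 ≤ ∑ k, ck r k ^ 2 := Finset.sum_nonneg fun k _ => sq_nonneg _
    have h3 : 0 < η ^ 2 := by positivity
    nlinarith [sq_nonneg (Ssum r)]
  have hwpos : ∀ r, 0 < w r := fun r =>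
    inv_pos.mpr (Real.sqrt_pos.mpr (hargpos r))
  set M : Matrix (Fin R) (Fin R) ℝ := S.transpose * S + lam • D1 with hMdef
  have hMpd : M.PosDef := by
    have h1 : (S.transpose * S).PosSemidef := by
      have := Matrix.posSemidef_conjTranspose_mul_self S; simpa using this
    have h2 : (lam • D1).PosDef := by
      rw [hD1, show lam • Matrix.diagonal w = Matrix.diagonal (fun r => lam * w r) from by
        ext i j; by_cases h : i = j <;> simp [Matrix.diagonal_apply, h]]
      exact Matrix.posDef_diagonal_iff.mpr fun r => mul_pos hlam (hwpos r)
    exact Matrix.PosDef.posSemidef_add h1 h2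
  have hMunit : IsUnit M.det := isUnit_iff_ne_zero.mpr hMpd.det_pos.ne'
  have hCM : Cstar * M = N.transpose * S := by
    rw [hCstar, Matrix.mul_assoc, Matrix.nonsing_inv_mul M hMunit, Matrix.mul_one]
  -- the normal equation, entrywise
  have hkey : ∀ (k : Fin K) (r : Fin R),
      (∑ p, S p r * (N p k - ∑ r', S p r' * Cstar k r')) = lam * (w r * Cstar k r) := by
    intro k r
    have h := congrFun (congrFun hCM k) r
    rw [hMdef] at h
    simp only [Matrix.mul_apply, Matrix.add_apply, Matrix.smul_apply, Matrix.transpose_apply,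
      hD1, Matrix.diagonal_apply, mul_add, mul_ite, mul_zero, smul_eq_mul] at h
    rw [Finset.sum_add_distrib, Finset.sum_ite_eq' Finset.univ r] at h
    simp only [Finset.mem_univ, if_true] at h
    have e1 : ∑ p, S p r * (N p k - ∑ r', S p r' * Cstar k r')
        = (∑ p, N p k * S p r) - ∑ r', Cstar k r' * ∑ p, S p r' * S p r := by
      calc ∑ p, S p r * (N p k - ∑ r', S p r' * Cstar k r')
          = ∑ p, (N p k * S p r - ∑ r', S p r * (S p r' * Cstar k r')) := by
            refine Finset.sum_congr rfl fun p _ => ?_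
            rw [mul_sub, Finset.mul_sum, mul_comm (S p r) (N p k)]
        _ = (∑ p, N p k * S p r) - ∑ p, ∑ r', S p r * (S p r' * Cstar k r') :=
            Finset.sum_sub_distrib _ _
        _ = (∑ p, N p k * S p r) - ∑ r', ∑ p, S p r * (S p r' * Cstar k r') := by
            rw [Finset.sum_comm]
        _ = (∑ p, N p k * S p r) - ∑ r', Cstar k r' * ∑ p, S p r' * S p r := by
            congr 1
            refine Finset.sum_congr rfl fun r' _ => ?_
            rw [Finset.mul_sum]
            exact Finset.sum_congr rfl fun p _ => by ring
    rw [e1]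
    linarith [h]
  -- convenient form of g
  have hgC : ∀ C' : Matrix (Fin K) (Fin R) ℝ,
      g C' = (1 / 2) * (∑ p, ∑ k, (N p k - ∑ r, S p r * C' k r) ^ 2)
        + (lam / 2) * ∑ r, (Ssum r ^ 2 + (∑ k, C' k r ^ 2) + η ^ 2) * w r := by
    intro C'
    rw [hg]
    simp only [Matrix.mul_apply, Matrix.transpose_apply, div_eq_mul_inv, hwdef]
  -- the key quadratic expansion around Cstar
  have hdiff : ∀ C : Matrix (Fin K) (Fin R) ℝ, g C = g Cstar
      + (1 / 2) * ∑ p, ∑ k, (∑ r, S p r * (C k r - Cstar k r)) ^ 2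
      + (lam / 2) * ∑ r, w r * ∑ k, (C k r - Cstar k r) ^ 2 := by
    intro C
    have hcross : ∑ p, ∑ k, ((N p k - ∑ r, S p r * Cstar k r)
          * ∑ r, S p r * (C k r - Cstar k r))
        = lam * ∑ r, w r * ∑ k, Cstar k r * (C k r - Cstar k r) := by
      calc ∑ p, ∑ k, ((N p k - ∑ r, S p r * Cstar k r) * ∑ r, S p r * (C k r - Cstar k r))
          = ∑ k, ∑ p, ((N p k - ∑ r, S p r * Cstar k r) * ∑ r, S p r * (C k r - Cstar k r)) :=
            Finset.sum_comm
        _ = ∑ k, ∑ p, ∑ r, (S p r * (N p k - ∑ r', S p r' * Cstar k r')) * (C k r - Cstar k r) := by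
            refine Finset.sum_congr rfl fun k _ => Finset.sum_congr rfl fun p _ => ?_
            rw [Finset.mul_sum]
            exact Finset.sum_congr rfl fun r _ => by ring
        _ = ∑ k, ∑ r, ∑ p, (S p r * (N p k - ∑ r', S p r' * Cstar k r')) * (C k r - Cstar k r) := by
            refine Finset.sum_congr rfl fun k _ => ?_
            rw [Finset.sum_comm]
        _ = ∑ k, ∑ r, (∑ p, S p r * (N p k - ∑ r', S p r' * Cstar k r')) * (C k r - Cstar k r) := by
            refine Finset.sum_congr rfl fun k _ => Finset.sum_congr rfl fun r _ => ?_
            rw [Finset.sum_mul]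
        _ = ∑ k, ∑ r, (lam * (w r * Cstar k r)) * (C k r - Cstar k r) := by
            refine Finset.sum_congr rfl fun k _ => Finset.sum_congr rfl fun r _ => ?_
            rw [hkey k r]
        _ = ∑ r, ∑ k, (lam * (w r * Cstar k r)) * (C k r - Cstar k r) := Finset.sum_comm
        _ = lam * ∑ r, w r * ∑ k, Cstar k r * (C k r - Cstar k r) := by
            rw [Finset.mul_sum]
            refine Finset.sum_congr rfl fun r _ => ?_
            rw [Finset.mul_sum, Finset.mul_sum]
            exact Finset.sum_congr rfl fun k _ => by ring
    have hFC : (∑ p, ∑ k, (N p k - ∑ r, S p r * C k r) ^ 2)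
        = (∑ p, ∑ k, (N p k - ∑ r, S p r * Cstar k r) ^ 2)
          - 2 * (lam * ∑ r, w r * ∑ k, Cstar k r * (C k r - Cstar k r))
          + ∑ p, ∑ k, (∑ r, S p r * (C k r - Cstar k r)) ^ 2 := by
      have hpt : (∑ p, ∑ k, (N p k - ∑ r, S p r * C k r) ^ 2)
          = ∑ p, ∑ k, ((N p k - ∑ r, S p r * Cstar k r) ^ 2
              - 2 * ((N p k - ∑ r, S p r * Cstar k r) * ∑ r, S p r * (C k r - Cstar k r))
              + (∑ r, S p r * (C k r - Cstar k r)) ^ 2) := by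
        refine Finset.sum_congr rfl fun p _ => Finset.sum_congr rfl fun k _ => ?_
        have hsplit : ∑ r, S p r * C k r
            = (∑ r, S p r * Cstar k r) + ∑ r, S p r * (C k r - Cstar k r) := by
          rw [← Finset.sum_add_distrib]
          exact Finset.sum_congr rfl fun r _ => by ring
        rw [hsplit]; ring
      rw [hpt]
      simp only [Finset.sum_add_distrib, Finset.sum_sub_distrib, ← Finset.mul_sum]
      rw [hcross]
    have hPC : (∑ r, (Ssum r ^ 2 + (∑ k, C k r ^ 2) + η ^ 2) * w r)
        = (∑ r, (Ssum r ^ 2 + (∑ k, Cstar k r ^ 2) + η ^ 2) * w r)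
          + 2 * ∑ r, w r * ∑ k, Cstar k r * (C k r - Cstar k r)
          + ∑ r, w r * ∑ k, (C k r - Cstar k r) ^ 2 := by
      rw [Finset.mul_sum, ← Finset.sum_add_distrib, ← Finset.sum_add_distrib]
      refine Finset.sum_congr rfl fun r _ => ?_
      have hCsq : ∑ k, C k r ^ 2
          = (∑ k, Cstar k r ^ 2) + 2 * (∑ k, Cstar k r * (C k r - Cstar k r))
            + ∑ k, (C k r - Cstar k r) ^ 2 := by
        rw [Finset.mul_sum, ← Finset.sum_add_distrib, ← Finset.sum_add_distrib]
        exact Finset.sum_congr rfl fun k _ => by ring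
      rw [hCsq]; ring
    rw [hgC C, hgC Cstar, hFC, hPC]; ring
  -- conclusion
  intro C
  have hT1 : 0 ≤ ∑ p, ∑ k, (∑ r, S p r * (C k r - Cstar k r)) ^ 2 :=
    Finset.sum_nonneg fun p _ => Finset.sum_nonneg fun k _ => sq_nonneg _
  have hT2 : 0 ≤ ∑ r, w r * ∑ k, (C k r - Cstar k r) ^ 2 :=
    Finset.sum_nonneg fun r _ =>
      mul_nonneg (hwpos r).le (Finset.sum_nonneg fun k _ => sq_nonneg _)
  have hlam2 : 0 ≤ (lam / 2) * ∑ r, w r * ∑ k, (C k r - Cstar k r) ^ 2 :=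
    mul_nonneg (by linarith) hT2
  have hle : g Cstar ≤ g C := by
    rw [hdiff C]; linarith
  refine ⟨hle, ?_, fun h => by rw [h]⟩
  intro heq
  have h0 : (1 / 2) * (∑ p, ∑ k, (∑ r, S p r * (C k r - Cstar k r)) ^ 2)
      + (lam / 2) * ∑ r, w r * ∑ k, (C k r - Cstar k r) ^ 2 = 0 := by
    have := hdiff C
    linarith [this, heq]
  have h1 : (lam / 2) * (∑ r, w r * ∑ k, (C k r - Cstar k r) ^ 2) = 0 := by
    linarith
  have hT2z : ∑ r, w r * ∑ k, (C k r - Cstar k r) ^ 2 = 0 :=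
    (mul_eq_zero.mp h1).resolve_left (by positivity)
  have hterm := (Finset.sum_eq_zero_iff_of_nonneg (fun r _ =>
    mul_nonneg (hwpos r).le (Finset.sum_nonneg fun k _ => sq_nonneg _))).mp hT2z
  ext k r
  have h3 : ∑ k, (C k r - Cstar k r) ^ 2 = 0 :=
    (mul_eq_zero.mp (hterm r (Finset.mem_univ r))).resolve_left (hwpos r).ne'
  have h4 := (Finset.sum_eq_zero_iff_of_nonneg (fun k _ => sq_nonneg _)).mp h3 k
    (Finset.mem_univ k)
  have h5 : C k r - Cstar k r = 0 := by
    nlinarith [sq_nonneg (C k r - Cstar k r)]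
  linarith
end

section
/- Let I, R, L, m be positive integers, N ∈ ℝ^{m×I}, P ∈ ℝ^{m×RL}, λ ≥ 0, and let β_{rl} ≥ 0 (for (r,l) ∈ {1,…,R}×{1,…,L}) and γ_r ≥ 0 (for r ∈ {1,…,R}) be nonnegative reals. Then the function A ↦ (1/2)‖N − P Aᵀ‖_F² + λ Σ_{r=1}^{R} √( ( Σ_{l=1}^{L} √(‖a_{rl}‖₂² + β_{rl}) )² + γ_r ), where a_{rl} denotes the (r,l)-th column of A ∈ ℝ^{I×RL}, is convex on ℝ^{I×RL}. In particular, taking β_{rl} = ‖b_{rl}‖₂² + η² and γ_r = ‖c_r‖₂² + η² for fixed factors B, C and real η, the objective of the BTD-HIRLS A-subproblem is convex in A. -/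

lemma sqrt_combo1 (x y c a b : ℝ) (hc : 0 ≤ c)
    (ha : 0 ≤ a) (hb : 0 ≤ b) (hab : a + b = 1) :
    Real.sqrt ((a * x + b * y) ^ 2 + c) ≤
      a * Real.sqrt (x ^ 2 + c) + b * Real.sqrt (y ^ 2 + c) := by
  set d1 := Real.sqrt (x ^ 2 + c) with hd1
  set d2 := Real.sqrt (y ^ 2 + c) with hd2
  have hd1n : 0 ≤ d1 := Real.sqrt_nonneg _
  have hd2n : 0 ≤ d2 := Real.sqrt_nonneg _
  have hsq1 : d1 ^ 2 = x ^ 2 + c := Real.sq_sqrt (by positivity)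
  have hsq2 : d2 ^ 2 = y ^ 2 + c := Real.sq_sqrt (by positivity)
  have hcs : x * y + c ≤ d1 * d2 := by
    have h2 : (x * y + c) ^ 2 ≤ (x ^ 2 + c) * (y ^ 2 + c) := by
      nlinarith [sq_nonneg (x - y), sq_nonneg (x * y)]
    calc x * y + c ≤ |x * y + c| := le_abs_self _
      _ = Real.sqrt ((x * y + c) ^ 2) := (Real.sqrt_sq_eq_abs _).symm
      _ ≤ Real.sqrt ((x ^ 2 + c) * (y ^ 2 + c)) := Real.sqrt_le_sqrt h2
      _ = d1 * d2 := Real.sqrt_mul (by positivity) _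
  have hfin : (a * x + b * y) ^ 2 + c ≤ (a * d1 + b * d2) ^ 2 := by
    have e : (a * d1 + b * d2) ^ 2
        = a ^ 2 * (x ^ 2 + c) + b ^ 2 * (y ^ 2 + c) + 2 * a * b * (d1 * d2) := by
      rw [← hsq1, ← hsq2]; ring
    have e2 : (a * x + b * y) ^ 2 + c
        = a ^ 2 * (x ^ 2 + c) + b ^ 2 * (y ^ 2 + c) + 2 * a * b * (x * y + c) := by
      linear_combination (-c * (a + b + 1)) * hab
    rw [e, e2]
    have h1 : 2 * a * b * (x * y + c) ≤ 2 * a * b * (d1 * d2) :=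
      mul_le_mul_of_nonneg_left hcs (by positivity)
    linarith
  calc Real.sqrt ((a * x + b * y) ^ 2 + c) ≤ Real.sqrt ((a * d1 + b * d2) ^ 2) :=
        Real.sqrt_le_sqrt hfin
    _ = a * d1 + b * d2 := Real.sqrt_sq (by positivity)

lemma sqrt_combo {n : ℕ} (u v : Fin n → ℝ) (c a b : ℝ) (hc : 0 ≤ c)
    (ha : 0 ≤ a) (hb : 0 ≤ b) (hab : a + b = 1) :
    Real.sqrt ((∑ i, (a * u i + b * v i) ^ 2) + c) ≤
      a * Real.sqrt ((∑ i, u i ^ 2) + c) + b * Real.sqrt ((∑ i, v i ^ 2) + c) := by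
  set p := ∑ i, u i ^ 2 with hp
  set q := ∑ i, v i ^ 2 with hq
  set s := ∑ i, u i * v i with hs
  have hpn : 0 ≤ p := Finset.sum_nonneg fun i _ => sq_nonneg _
  have hqn : 0 ≤ q := Finset.sum_nonneg fun i _ => sq_nonneg _
  have hexp : (∑ i, (a * u i + b * v i) ^ 2) = a ^ 2 * p + 2 * a * b * s + b ^ 2 * q := by
    rw [hp, hq, hs, Finset.mul_sum, Finset.mul_sum, Finset.mul_sum,
      ← Finset.sum_add_distrib, ← Finset.sum_add_distrib]
    exact Finset.sum_congr rfl fun i _ => by ring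
  have hcs : s ^ 2 ≤ p * q := Finset.sum_mul_sq_le_sq_mul_sq Finset.univ u v
  have hamgm : 2 * s ≤ p + q := by
    rw [hs, hp, hq, Finset.mul_sum, ← Finset.sum_add_distrib]
    exact Finset.sum_le_sum fun i _ => by nlinarith [sq_nonneg (u i - v i)]
  set d1 := Real.sqrt (p + c) with hd1
  set d2 := Real.sqrt (q + c) with hd2
  have hd1n : 0 ≤ d1 := Real.sqrt_nonneg _
  have hd2n : 0 ≤ d2 := Real.sqrt_nonneg _
  have hsq1 : d1 ^ 2 = p + c := Real.sq_sqrt (by positivity)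
  have hsq2 : d2 ^ 2 = q + c := Real.sq_sqrt (by positivity)
  have hscs : s + c ≤ d1 * d2 := by
    have h2 : (s + c) ^ 2 ≤ (p + c) * (q + c) := by nlinarith
    calc s + c ≤ |s + c| := le_abs_self _
      _ = Real.sqrt ((s + c) ^ 2) := (Real.sqrt_sq_eq_abs _).symm
      _ ≤ Real.sqrt ((p + c) * (q + c)) := Real.sqrt_le_sqrt h2
      _ = d1 * d2 := Real.sqrt_mul (by positivity) _
  have hfin : (∑ i, (a * u i + b * v i) ^ 2) + c ≤ (a * d1 + b * d2) ^ 2 := by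
    rw [hexp]
    have e : (a * d1 + b * d2) ^ 2
        = a ^ 2 * (p + c) + b ^ 2 * (q + c) + 2 * a * b * (d1 * d2) := by
      rw [← hsq1, ← hsq2]; ring
    have e2 : a ^ 2 * p + 2 * a * b * s + b ^ 2 * q + c
        = a ^ 2 * (p + c) + b ^ 2 * (q + c) + 2 * a * b * (s + c) := by
      linear_combination (-c * (a + b + 1)) * hab
    rw [e, e2]
    have h1 : 2 * a * b * (s + c) ≤ 2 * a * b * (d1 * d2) :=
      mul_le_mul_of_nonneg_left hscs (by positivity)
    linarith
  calc Real.sqrt ((∑ i, (a * u i + b * v i) ^ 2) + c)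
      ≤ Real.sqrt ((a * d1 + b * d2) ^ 2) := Real.sqrt_le_sqrt hfin
    _ = a * d1 + b * d2 := Real.sqrt_sq (by positivity)

lemma sqrt_sq_mono {x y c : ℝ} (hx : 0 ≤ x) (hxy : x ≤ y) :
    Real.sqrt (x ^ 2 + c) ≤ Real.sqrt (y ^ 2 + c) :=
  Real.sqrt_le_sqrt (by nlinarith)

lemma sq_combo (x y a b : ℝ) (ha : 0 ≤ a) (hb : 0 ≤ b) (hab : a + b = 1) :
    (a * x + b * y) ^ 2 ≤ a * x ^ 2 + b * y ^ 2 := by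
  have hb' : b = 1 - a := by linarith
  subst hb'
  nlinarith [mul_nonneg (mul_nonneg ha (by linarith : (0:ℝ) ≤ 1 - a)) (sq_nonneg (x - y))]

/-- Convexity in `A` of the BTD-HIRLS A-subproblem objective:
data-fidelity term plus the smoothed two-level hierarchical ℓ₁,₂ penalty
(with the contributions of the other factors frozen into constants
`β_{rl} ≥ 0`, `γ_r ≥ 0`). -/
theorem stmt_7 (I R L m : ℕ)
    (hI : 0 < I) (hR : 0 < R) (hL : 0 < L) (hm : 0 < m)
    (N : Matrix (Fin m) (Fin I) ℝ) (P : Matrix (Fin m) (Fin R × Fin L) ℝ)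
    (lam : ℝ) (hlam : 0 ≤ lam)
    (β : Fin R × Fin L → ℝ) (hβ : ∀ p, 0 ≤ β p)
    (γ : Fin R → ℝ) (hγ : ∀ r, 0 ≤ γ r) :
    ConvexOn ℝ Set.univ (fun A : Matrix (Fin I) (Fin R × Fin L) ℝ =>
      (1 / 2) * (∑ q, ∑ i, (N q i - (P * A.transpose) q i) ^ 2)
        + lam * ∑ r, Real.sqrt
            ((∑ l, Real.sqrt ((∑ i, A i (r, l) ^ 2) + β (r, l))) ^ 2 + γ r)) := by
  refine ⟨convex_univ, ?_⟩
  intro A _ B _ a b ha hb hab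
  simp only [smul_eq_mul]
  have hent : ∀ (i : Fin I) (p : Fin R × Fin L),
      (a • A + b • B) i p = a * A i p + b * B i p := by
    intro i p; simp [Matrix.add_apply, Matrix.smul_apply, smul_eq_mul]
  -- linearity of the data term's affine map
  have hlin : ∀ (q : Fin m) (i : Fin I),
      (P * (a • A + b • B).transpose) q i
        = a * (P * A.transpose) q i + b * (P * B.transpose) q i := by
    intro q i
    simp only [Matrix.mul_apply, Matrix.transpose_apply, hent]
    rw [Finset.mul_sum, Finset.mul_sum, ← Finset.sum_add_distrib]
    exact Finset.sum_congr rfl fun j _ => by ring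
  -- data fidelity term
  have hT : (∑ q, ∑ i, (N q i - (P * (a • A + b • B).transpose) q i) ^ 2)
      ≤ a * (∑ q, ∑ i, (N q i - (P * A.transpose) q i) ^ 2)
        + b * (∑ q, ∑ i, (N q i - (P * B.transpose) q i) ^ 2) := by
    rw [Finset.mul_sum, Finset.mul_sum, ← Finset.sum_add_distrib]
    refine Finset.sum_le_sum fun q _ => ?_
    rw [Finset.mul_sum, Finset.mul_sum, ← Finset.sum_add_distrib]
    refine Finset.sum_le_sum fun i _ => ?_
    rw [hlin]
    have en : N q i - (a * (P * A.transpose) q i + b * (P * B.transpose) q i)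
        = a * (N q i - (P * A.transpose) q i) + b * (N q i - (P * B.transpose) q i) := by
      linear_combination (-(N q i)) * hab
    rw [en]
    exact sq_combo _ _ a b ha hb hab
  -- penalty term, per r
  have hS : ∀ r : Fin R,
      Real.sqrt ((∑ l, Real.sqrt ((∑ i, (a • A + b • B) i (r, l) ^ 2) + β (r, l))) ^ 2 + γ r)
        ≤ a * Real.sqrt ((∑ l, Real.sqrt ((∑ i, A i (r, l) ^ 2) + β (r, l))) ^ 2 + γ r)
          + b * Real.sqrt ((∑ l, Real.sqrt ((∑ i, B i (r, l) ^ 2) + β (r, l))) ^ 2 + γ r) := by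
    intro r
    set SA := ∑ l, Real.sqrt ((∑ i, A i (r, l) ^ 2) + β (r, l)) with hSA
    set SB := ∑ l, Real.sqrt ((∑ i, B i (r, l) ^ 2) + β (r, l)) with hSB
    set SC := ∑ l, Real.sqrt ((∑ i, (a • A + b • B) i (r, l) ^ 2) + β (r, l)) with hSC
    have hSCn : 0 ≤ SC := Finset.sum_nonneg fun _ _ => Real.sqrt_nonneg _
    have hle : SC ≤ a * SA + b * SB := by
      rw [hSC, hSA, hSB, Finset.mul_sum, Finset.mul_sum, ← Finset.sum_add_distrib]
      refine Finset.sum_le_sum fun l _ => ?_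
      simp only [hent]
      exact sqrt_combo (fun i => A i (r, l)) (fun i => B i (r, l)) _ a b (hβ _) ha hb hab
    calc Real.sqrt (SC ^ 2 + γ r) ≤ Real.sqrt ((a * SA + b * SB) ^ 2 + γ r) :=
          sqrt_sq_mono hSCn hle
      _ ≤ a * Real.sqrt (SA ^ 2 + γ r) + b * Real.sqrt (SB ^ 2 + γ r) :=
          sqrt_combo1 SA SB (γ r) a b (hγ r) ha hb hab
  have hS' : (∑ r, Real.sqrt
        ((∑ l, Real.sqrt ((∑ i, (a • A + b • B) i (r, l) ^ 2) + β (r, l))) ^ 2 + γ r))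
      ≤ a * (∑ r, Real.sqrt ((∑ l, Real.sqrt ((∑ i, A i (r, l) ^ 2) + β (r, l))) ^ 2 + γ r))
        + b * (∑ r, Real.sqrt ((∑ l, Real.sqrt ((∑ i, B i (r, l) ^ 2) + β (r, l))) ^ 2 + γ r)) := by
    rw [Finset.mul_sum, Finset.mul_sum, ← Finset.sum_add_distrib]
    exact Finset.sum_le_sum fun r _ => hS r
  have h2 := mul_le_mul_of_nonneg_left hT (by norm_num : (0:ℝ) ≤ 1 / 2)
  have h3 := mul_le_mul_of_nonneg_left hS' hlam
  nlinarith [h2, h3]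
end
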